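/- arXiv:2506.13753 — 3 statements merged into one kernel-verified Lean document; each statement's English description precedes it below -/
import Mathlib

section
/- Let d ≥ 1 and let p, q ∈ EuclideanSpace ℝ (Fin d). Then the cyclic distance decomposes coordinatewise: ⨅_{v : Fin d → ℤ} ‖p - (q + v̄)‖ = sqrt( Σ_{i} ( ⨅_{n ∈ ℤ} |p i - q i - n| )² ). -/
/-! The squared distance from `p` to `q + v̄` is a sum of independent one-dimensional terms
`(pᵢ - qᵢ - vᵢ)²`, so it is minimised by rounding each `pᵢ - qᵢ` separately. -/

noncomputable def latticePt {d : ℕ} (v : Fin d → ℤ) : EuclideanSpace ℝ (Fin d) :=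
  WithLp.toLp 2 (fun i => (v i : ℝ))

theorem iInf_abs_sub_intCast (x : ℝ) : ⨅ n : ℤ, |x - n| = |x - round x| :=
  le_antisymm (ciInf_le ⟨0, by rintro _ ⟨n, rfl⟩; positivity⟩ (round x))
    (le_ciInf (round_le x))

theorem norm_sub_add_latticePt {d : ℕ} (p q : EuclideanSpace ℝ (Fin d)) (v : Fin d → ℤ) :
    ‖p - (q + latticePt v)‖ = √(∑ i, (p i - q i - v i) ^ 2) := by
  simp [EuclideanSpace.norm_eq, latticePt, sub_sub]

theorem isLeast_sqrt_sum_sq_sub_intCast {ι : Type*} [Fintype ι] (x : ι → ℝ) :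
    IsLeast (Set.range fun v : ι → ℤ => √(∑ i, (x i - v i) ^ 2))
      (√(∑ i, (x i - round (x i)) ^ 2)) := by
  refine ⟨⟨fun i => round (x i), rfl⟩, ?_⟩
  rintro _ ⟨v, rfl⟩
  refine Real.sqrt_le_sqrt (Finset.sum_le_sum fun i _ => ?_)
  simpa only [sq_abs] using pow_le_pow_left₀ (abs_nonneg _) (round_le (x i) (v i)) 2

theorem stmt3_general {d : ℕ} (p q : EuclideanSpace ℝ (Fin d)) :
    ⨅ v : Fin d → ℤ, ‖p - (q + latticePt v)‖ =
      Real.sqrt (∑ i, (⨅ n : ℤ, |p i - q i - (n : ℝ)|) ^ 2) := by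
  simp only [norm_sub_add_latticePt, iInf_abs_sub_intCast, sq_abs]
  exact (isLeast_sqrt_sum_sq_sub_intCast fun i => p i - q i).csInf_eq

/-- The cyclic distance decomposes coordinatewise: it is the Euclidean norm of the vector
of one-dimensional cyclic distances. -/
theorem stmt3 {d : ℕ} (hd : 1 ≤ d) (p q : EuclideanSpace ℝ (Fin d)) :
    ⨅ v : Fin d → ℤ, ‖p - (q + latticePt v)‖ =
      Real.sqrt (∑ i, (⨅ n : ℤ, |p i - q i - (n : ℝ)|) ^ 2) :=
  stmt3_general p q
end

section
/- Let d ≥ 1 and let a, b ∈ EuclideanSpace ℝ (Fin d) satisfy |b i - a i| < 1 for every coordinate i. Then the segment [a,b] meets at most d + 1 cells of the unit grid: the set { (fun i => ⌊z i⌋) : z ∈ segment ℝ a b } ⊆ (Fin d → ℤ) has cardinality at most d + 1. -/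
lemma coordKey (α β : ℝ) (hβ : |β - α| < 1) {s t : ℝ}
    (hs0 : 0 ≤ s) (ht1 : t ≤ 1) (hst : s ≤ t) :
    (⌊α + s*(β-α)⌋ - ⌊α⌋).natAbs ≤ (⌊α + t*(β-α)⌋ - ⌊α⌋).natAbs ∧
    ((⌊α + s*(β-α)⌋ - ⌊α⌋).natAbs = (⌊α + t*(β-α)⌋ - ⌊α⌋).natAbs →
      ⌊α + s*(β-α)⌋ = ⌊α + t*(β-α)⌋) ∧
    (⌊α + t*(β-α)⌋ - ⌊α⌋).natAbs ≤ 1 := by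
  rw [abs_lt] at hβ
  have hfl := Int.floor_le α
  have hfl2 := Int.lt_floor_add_one α
  rcases le_or_gt α β with hab | hab
  · have h1 : α ≤ α + s*(β-α) := by nlinarith
    have h2 : α + s*(β-α) ≤ α + t*(β-α) := by nlinarith
    have h3 : α + t*(β-α) < (⌊α⌋ + 2 : ℤ) := by push_cast; nlinarith
    have f1 := Int.floor_le_floor h1
    have f2 := Int.floor_le_floor h2
    have f3 : ⌊α + t*(β-α)⌋ < ⌊α⌋ + 2 := Int.floor_lt.mpr h3
    omega
  · have h1 : α + s*(β-α) ≤ α := by nlinarith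
    have h2 : α + t*(β-α) ≤ α + s*(β-α) := by nlinarith
    have h3 : ((⌊α⌋ - 1 : ℤ) : ℝ) ≤ α + t*(β-α) := by push_cast; nlinarith
    have f1 := Int.floor_le_floor h1
    have f2 := Int.floor_le_floor h2
    have f3 : ⌊α⌋ - 1 ≤ ⌊α + t*(β-α)⌋ := Int.le_floor.mpr h3
    omega

/-- A segment whose extent in every coordinate is less than `1` meets at most `d + 1`
cells of the unit grid (cells being recorded by the vector of floors). -/
theorem stmt7 {d : ℕ} (hd : 1 ≤ d) (a b : EuclideanSpace ℝ (Fin d))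
    (h : ∀ i, |b i - a i| < 1) :
    ((fun z : EuclideanSpace ℝ (Fin d) => fun i => ⌊z i⌋) '' segment ℝ a b).Finite ∧
      ((fun z : EuclideanSpace ℝ (Fin d) => fun i => ⌊z i⌋) '' segment ℝ a b).ncard ≤
        d + 1 := by
  rw [segment_eq_image', ← Set.image_comp]
  set G : ℝ → (Fin d → ℤ) := fun t i => ⌊a i + t * (b i - a i)⌋ with hGdef
  have hcomp : ((fun z : EuclideanSpace ℝ (Fin d) => fun i => ⌊z i⌋) ∘
      fun θ => a + θ • (b - a)) = G := by
    funext t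
    ext i
    simp [hGdef, PiLp.add_apply, PiLp.smul_apply, PiLp.sub_apply, smul_eq_mul]
  rw [hcomp]
  set N : (Fin d → ℤ) → ℕ := fun v => ∑ i, (v i - ⌊a i⌋).natAbs with hNdef
  -- key facts
  have key : ∀ s ∈ Set.Icc (0:ℝ) 1, ∀ t ∈ Set.Icc (0:ℝ) 1, s ≤ t →
      (∀ i, ((G s i - ⌊a i⌋).natAbs ≤ (G t i - ⌊a i⌋).natAbs)) ∧
      (N (G s) = N (G t) → G s = G t) ∧ (∀ i, (G t i - ⌊a i⌋).natAbs ≤ 1) := by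
    intro s hs t ht hst
    have C := fun i => coordKey (a i) (b i) (h i) hs.1 ht.2 hst
    refine ⟨fun i => (C i).1, ?_, fun i => (C i).2.2⟩
    intro hN
    have heq : ∀ i ∈ Finset.univ, (G s i - ⌊a i⌋).natAbs = (G t i - ⌊a i⌋).natAbs :=
      (Finset.sum_eq_sum_iff_of_le (fun i _ => (C i).1)).mp hN
    funext i
    exact (C i).2.1 (heq i (Finset.mem_univ i))
  have hinj : Set.InjOn N (G '' Set.Icc 0 1) := by
    rintro _ ⟨s, hs, rfl⟩ _ ⟨t, ht, rfl⟩ hN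
    rcases le_total s t with hst | hst
    · exact (key s hs t ht hst).2.1 hN
    · exact ((key t ht s hs hst).2.1 hN.symm).symm
  have hbound : ∀ v ∈ G '' Set.Icc 0 1, N v ≤ d := by
    rintro _ ⟨t, ht, rfl⟩
    calc N (G t) ≤ ∑ _i : Fin d, 1 :=
          Finset.sum_le_sum fun i _ => (key t ht t ht le_rfl).2.2 i
      _ = d := by simp
  have hsub : N '' (G '' Set.Icc 0 1) ⊆ ↑(Finset.range (d + 1)) := by
    rintro _ ⟨v, hv, rfl⟩
    simpa using Nat.lt_succ_of_le (hbound v hv)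
  have hfin : (G '' Set.Icc 0 1).Finite :=
    Set.Finite.of_finite_image ((Finset.range (d+1)).finite_toSet.subset hsub) hinj
  refine ⟨hfin, ?_⟩
  calc (G '' Set.Icc 0 1).ncard = (N '' (G '' Set.Icc 0 1)).ncard :=
        (Set.ncard_image_of_injOn hinj).symm
    _ ≤ (↑(Finset.range (d + 1)) : Set ℕ).ncard :=
        Set.ncard_le_ncard hsub (Finset.range (d+1)).finite_toSet
    _ = d + 1 := by rw [Set.ncard_coe_finset, Finset.card_range]
end

section
/- For every integer d ≥ 1 there exist constants 0 < c₁ ≤ c₂ (depending only on d) such that the following holds for every integer m ≥ 1: if X₁, …, X_m, Y are independent random points, each uniformly distributed in the unit cube [0,1]^d ⊆ EuclideanSpace ℝ (Fin d) (i.e. the joint law is the (m+1)-fold product of the uniform probability measure on the cube), then c₁ · m^{-1/d} ≤ E[ min_{1 ≤ j ≤ m} ‖Y - X_j‖ ] ≤ c₂ · m^{-1/d}. (This is the expected length of the edge added in an iteration of the nearest-vertex tree-building algorithm.) -/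
open MeasureTheory

/-- The unit cube `[0,1]^d` in `EuclideanSpace ℝ (Fin d)`. -/
def unitCube (d : ℕ) : Set (EuclideanSpace ℝ (Fin d)) :=
  {x | ∀ i, x i ∈ Set.Icc (0 : ℝ) 1}

/-- The uniform probability measure on the unit cube (Lebesgue restricted to the cube). -/
noncomputable def cubeUniform (d : ℕ) : Measure (EuclideanSpace ℝ (Fin d)) :=
  volume.restrict (unitCube d)

/-!
Fix `y` in the cube. Each `X_j` lands within distance `t` of `y` with probability
`p(t) = P(‖y - X‖ ≤ t)`, so `P(min_j ‖y - X_j‖ > t) = (1 - p(t))^m`. The ball of radius `t`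
sits in a cube of side `2t`, so `p(t) ≤ (2t)^d`; a subcube of side `s` containing `y` fits in
both the unit cube and the ball of radius `√d s`, so `p(√d s) ≥ s^d`. With `τ = m^(-1/d)` the
first bound makes the tail at `τ/4` at least `(1 - 1/(2m))^m ≥ 1/2`, and Markov's inequality
gives `E ≥ τ/8`. The second makes the tail at most `exp(-m (t/√d)^d)`, whose integral over
`t > 0` is `√d Γ(1 + 1/d) τ`; the layer-cake formula turns this into `E ≤ √d Γ(1 + 1/d) τ`.
-/

open Set Metric Real

theorem lt_ciInf_iff_of_finite {ι α : Type*} [Finite ι] [Nonempty ι]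
    [ConditionallyCompleteLinearOrder α] {f : ι → α} {a : α} :
    a < ⨅ i, f i ↔ ∀ i, a < f i :=
  ⟨fun h i => h.trans_le (ciInf_le (finite_range f).bddBelow i), fun h => by
    obtain ⟨i, hi⟩ := exists_eq_ciInf_of_finite (f := f)
    exact hi ▸ h i⟩

theorem one_sub_min_pow_pow_le_exp {x : ℝ} (hx : 0 ≤ x) (d m : ℕ) :
    (1 - min x 1 ^ d) ^ m ≤ exp (-(m * x ^ d)) := by
  rcases le_total x 1 with h | h
  · rw [min_eq_left h]
    calc (1 - x ^ d) ^ m ≤ exp (-x ^ d) ^ m :=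
          pow_le_pow_left₀ (sub_nonneg.2 (pow_le_one₀ hx h)) (one_sub_le_exp_neg _) m
      _ = exp (-(m * x ^ d)) := by rw [← exp_nat_mul]; ring_nf
  · rw [min_eq_right h, one_pow, sub_self]
    rcases m.eq_zero_or_pos with rfl | hm
    · simp
    · rw [zero_pow hm.ne']; positivity

theorem one_div_two_le_one_sub_pow (m : ℕ) : 1 / 2 ≤ (1 - 1 / (2 * m : ℝ)) ^ m := by
  rcases m.eq_zero_or_pos with rfl | hm
  · norm_num
  have hm' : (1 : ℝ) ≤ m := by exact_mod_cast hm
  calc (1 / 2 : ℝ) = 1 + m * -(1 / (2 * m)) := by field_simp; ring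
    _ ≤ (1 + -(1 / (2 * m : ℝ))) ^ m := one_add_mul_le_pow (by
        have : 1 / (2 * m : ℝ) ≤ 1 := by rw [div_le_one (by positivity)]; linarith
        linarith) m
    _ = (1 - 1 / (2 * m : ℝ)) ^ m := by ring

theorem rpow_neg_one_div_natCast_pow {x : ℝ} (hx : 0 ≤ x) {d : ℕ} (hd : d ≠ 0) :
    (x ^ (-(1 : ℝ) / d)) ^ d = x⁻¹ := by
  rw [neg_div, rpow_neg hx, inv_pow, one_div, rpow_inv_natCast_pow hx hd]

theorem exp_neg_mul_div_pow_eq {a c : ℝ} (d : ℕ) :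
    (fun t => exp (-(a * (t / c) ^ d))) = fun t => exp (-(a / c ^ d) * t ^ (d : ℝ)) := by
  ext t; rw [rpow_natCast, div_pow]; ring_nf

theorem integrableOn_exp_neg_mul_div_pow {a c : ℝ} (ha : 0 < a) (hc : 0 < c) {d : ℕ}
    (hd : d ≠ 0) : IntegrableOn (fun t => exp (-(a * (t / c) ^ d))) (Ioi 0) := by
  rw [exp_neg_mul_div_pow_eq]
  simpa using integrableOn_rpow_mul_exp_neg_mul_rpow (s := 0) (by norm_num)
    (by positivity : (0 : ℝ) < d) (by positivity : 0 < a / c ^ d)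

theorem integral_exp_neg_mul_div_pow {a c : ℝ} (ha : 0 < a) (hc : 0 < c) {d : ℕ}
    (hd : d ≠ 0) :
    ∫ t in Ioi 0, exp (-(a * (t / c) ^ d)) = c * a ^ (-(1 : ℝ) / d) * Gamma (1 / d + 1) := by
  have hc' : (c ^ d) ^ (-(1 : ℝ) / d) = c⁻¹ := by
    rw [neg_div, rpow_neg (by positivity), one_div, pow_rpow_inv_natCast hc.le hd]
  rw [exp_neg_mul_div_pow_eq, integral_exp_neg_mul_rpow (by positivity) (by positivity),
    div_rpow ha.le (by positivity), hc', div_inv_eq_mul]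
  ring

theorem EuclideanSpace.dist_le_sqrt_card_mul {ι : Type*} [Fintype ι] {x y : EuclideanSpace ℝ ι}
    {s : ℝ} (hs : 0 ≤ s) (h : ∀ i, |x i - y i| ≤ s) : dist x y ≤ √(Fintype.card ι) * s := by
  rw [dist_eq_norm]
  refine (EuclideanSpace.basisFun ι ℝ).norm_le_card_mul_iSup_norm_inner _ |>.trans ?_
  gcongr
  exact Real.iSup_le (fun i => by simpa using h i) hs

section NearestDist

variable {ι E : Type*} [SeminormedAddCommGroup E]

noncomputable def nearestDist (ω : (ι → E) × E) : ℝ :=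
  ⨅ j, ‖ω.2 - ω.1 j‖

theorem nearestDist_nonneg (ω : (ι → E) × E) : 0 ≤ nearestDist ω :=
  Real.iInf_nonneg fun _ => norm_nonneg _

variable [Fintype ι]

theorem lt_nearestDist_iff [Nonempty ι] {ω : (ι → E) × E} {t : ℝ} :
    t < nearestDist ω ↔ ∀ j, t < ‖ω.2 - ω.1 j‖ :=
  lt_ciInf_iff_of_finite

variable [MeasurableSpace E] [OpensMeasurableSpace E] [MeasurableSub₂ E]

theorem measurable_nearestDist : Measurable (nearestDist (ι := ι) (E := E)) :=
  Measurable.iInf fun j => by fun_prop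

variable [Nonempty ι] (μ ν : Measure E)

theorem measure_lt_nearestDist [SigmaFinite μ] [SFinite ν] (t : ℝ) :
    ((Measure.pi fun _ : ι => μ).prod ν) {ω | t < nearestDist ω} =
      ∫⁻ y, μ {x | t < ‖y - x‖} ^ Fintype.card ι ∂ν := by
  rw [Measure.prod_apply_symm (measurableSet_lt measurable_const measurable_nearestDist)]
  refine lintegral_congr fun y => ?_
  have : (fun xs => (xs, y)) ⁻¹' {ω | t < nearestDist ω} =
      univ.pi fun _ : ι => {x | t < ‖y - x‖} := by
    ext xs; simp [lt_nearestDist_iff]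
  rw [this, Measure.pi_pi, Finset.prod_const, Finset.card_univ]

variable [IsProbabilityMeasure μ] [IsProbabilityMeasure ν] {μ ν}

theorem measureReal_lt_nearestDist_le {t b : ℝ} (hb : 0 ≤ b)
    (h : ∀ᵐ y ∂ν, μ {x | t < ‖y - x‖} ≤ ENNReal.ofReal b) :
    ((Measure.pi fun _ : ι => μ).prod ν).real {ω | t < nearestDist ω} ≤
      b ^ Fintype.card ι := by
  refine ENNReal.toReal_le_of_le_ofReal (by positivity) ?_
  rw [measure_lt_nearestDist, ENNReal.ofReal_pow hb]
  calc _ ≤ ∫⁻ _, ENNReal.ofReal b ^ Fintype.card ι ∂ν :=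
        lintegral_mono_ae (h.mono fun y hy => pow_le_pow_left' hy _)
    _ = _ := by simp

theorem le_measureReal_lt_nearestDist {t b : ℝ} (hb : 0 ≤ b)
    (h : ∀ᵐ y ∂ν, ENNReal.ofReal b ≤ μ {x | t < ‖y - x‖}) :
    b ^ Fintype.card ι ≤
      ((Measure.pi fun _ : ι => μ).prod ν).real {ω | t < nearestDist ω} := by
  refine (ENNReal.ofReal_le_iff_le_toReal (measure_ne_top _ _)).1 ?_
  rw [measure_lt_nearestDist, ENNReal.ofReal_pow hb]
  calc _ = ∫⁻ _, ENNReal.ofReal b ^ Fintype.card ι ∂ν := by simp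
    _ ≤ _ := lintegral_mono_ae (h.mono fun y hy => pow_le_pow_left' hy _)

end NearestDist

theorem measure_lt_norm_sub_eq {E : Type*} [SeminormedAddCommGroup E] [MeasurableSpace E]
    [OpensMeasurableSpace E] (μ : Measure E) [IsProbabilityMeasure μ] (y : E) (t : ℝ) :
    μ {x | t < ‖y - x‖} = 1 - μ (closedBall y t) := by
  rw [← prob_compl_eq_one_sub measurableSet_closedBall]
  congr 1; ext x; simp [dist_eq_norm']

section Cube

variable {d : ℕ}

theorem unitCube_eq_preimage (d : ℕ) : unitCube d = WithLp.ofLp ⁻¹' Icc 0 1 := by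
  ext x; simp [unitCube, Pi.le_def, forall_and]

theorem measurableSet_unitCube (d : ℕ) : MeasurableSet (unitCube d) := by
  rw [unitCube_eq_preimage]; exact measurableSet_Icc.preimage (by fun_prop)

theorem volume_unitCube (d : ℕ) : volume (unitCube d) = 1 := by
  rw [unitCube_eq_preimage, (PiLp.volume_preserving_ofLp _).measure_preimage
    measurableSet_Icc.nullMeasurableSet, Real.volume_Icc_pi]
  simp

instance (d : ℕ) : IsProbabilityMeasure (cubeUniform d) :=
  ⟨by rw [cubeUniform, Measure.restrict_apply_univ, volume_unitCube]⟩

theorem ae_mem_unitCube (d : ℕ) : ∀ᵐ y ∂cubeUniform d, y ∈ unitCube d :=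
  ae_restrict_mem (measurableSet_unitCube d)

theorem volume_closedBall_le (y : EuclideanSpace ℝ (Fin d)) {r : ℝ} (hr : 0 ≤ r) :
    volume (closedBall y r) ≤ ENNReal.ofReal ((2 * r) ^ d) := by
  calc volume (closedBall y r)
      ≤ volume (WithLp.ofLp ⁻¹' closedBall (WithLp.ofLp y) r) := by
        refine measure_mono fun x hx => ?_
        simpa using (PiLp.lipschitzWith_ofLp 2 _).dist_le_mul_of_le hx
    _ = ENNReal.ofReal ((2 * r) ^ d) := by
        rw [(PiLp.volume_preserving_ofLp _).measure_preimage
          measurableSet_closedBall.nullMeasurableSet, Real.volume_pi_closedBall _ hr,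
          Fintype.card_fin]

theorem ofReal_pow_le_cubeUniform_closedBall {y : EuclideanSpace ℝ (Fin d)}
    (hy : y ∈ unitCube d) {s : ℝ} (hs₀ : 0 ≤ s) (hs₁ : s ≤ 1) :
    ENNReal.ofReal (s ^ d) ≤ cubeUniform d (closedBall y (√d * s)) := by
  -- a subcube of side `s` that contains `y` and lies inside the unit cube
  set a : Fin d → ℝ := fun i => min (y i) (1 - s)
  have ha i : 0 ≤ a i ∧ a i + s ≤ 1 ∧ a i ≤ y i ∧ y i ≤ a i + s := by
    have := hy i
    refine ⟨le_min this.1 (by linarith), ?_, min_le_left _ _, ?_⟩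
    · linarith [min_le_right (y i) (1 - s)]
    · linarith [le_min (show y i - s ≤ y i by linarith) (show y i - s ≤ 1 - s by linarith [this.2])]
  set box := WithLp.ofLp ⁻¹' Icc a (a + fun _ => s)
  have hbox_cube : box ⊆ unitCube d := fun x hx i =>
    ⟨(ha i).1.trans (hx.1 i), (hx.2 i).trans (ha i).2.1⟩
  have hbox_ball : box ⊆ closedBall y (√d * s) := fun x hx => by
    simpa using EuclideanSpace.dist_le_sqrt_card_mul (x := x) (y := y) hs₀ fun i => by
      have := hx.1 i; have := hx.2 i; have := ha i
      simp only [Pi.add_apply] at *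
      rw [abs_le]; constructor <;> linarith
  calc ENNReal.ofReal (s ^ d) = volume box := by
        rw [(PiLp.volume_preserving_ofLp _).measure_preimage measurableSet_Icc.nullMeasurableSet,
          Real.volume_Icc_pi]
        simp [ENNReal.ofReal_pow hs₀]
    _ = cubeUniform d box := by
        rw [cubeUniform, Measure.restrict_apply' (measurableSet_unitCube d),
          inter_eq_left.2 hbox_cube]
    _ ≤ cubeUniform d (closedBall y (√d * s)) := measure_mono hbox_ball

theorem ofReal_one_sub_le_cubeUniform_lt_norm_sub (y : EuclideanSpace ℝ (Fin d)) {t : ℝ}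
    (ht : 0 ≤ t) :
    ENNReal.ofReal (1 - (2 * t) ^ d) ≤ cubeUniform d {x | t < ‖y - x‖} := by
  rw [measure_lt_norm_sub_eq, ENNReal.ofReal_sub _ (by positivity), ENNReal.ofReal_one]
  gcongr
  exact (Measure.restrict_le_self _).trans (volume_closedBall_le y ht)

theorem cubeUniform_lt_norm_sub_le {y : EuclideanSpace ℝ (Fin d)} (hy : y ∈ unitCube d) {s : ℝ}
    (hs₀ : 0 ≤ s) (hs₁ : s ≤ 1) :
    cubeUniform d {x | √d * s < ‖y - x‖} ≤ ENNReal.ofReal (1 - s ^ d) := by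
  rw [measure_lt_norm_sub_eq, ENNReal.ofReal_sub _ (by positivity), ENNReal.ofReal_one]
  gcongr
  exact ofReal_pow_le_cubeUniform_closedBall hy hs₀ hs₁

end Cube

section NearestPointInCube

variable {d m : ℕ} [NeZero m]

theorem measureReal_lt_nearestDist_le_exp (hd : d ≠ 0) {t : ℝ} (ht : 0 ≤ t) :
    ((Measure.pi fun _ : Fin m => cubeUniform d).prod (cubeUniform d)).real
      {ω | t < nearestDist ω} ≤ exp (-(m * (t / √d) ^ d)) := by
  set s := min (t / √d) 1
  have hs₀ : 0 ≤ s := by positivity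
  have hs₁ : s ≤ 1 := min_le_right _ _
  have hst : √d * s ≤ t := calc
    √d * s ≤ √d * (t / √d) := by gcongr; exact min_le_left _ _
    _ = t := mul_div_cancel₀ _ (by positivity)
  refine (measureReal_lt_nearestDist_le (b := 1 - s ^ d) (sub_nonneg.2 (pow_le_one₀ hs₀ hs₁))
    ((ae_mem_unitCube d).mono fun y hy => ?_)).trans ?_
  · exact (measure_mono fun x hx => hst.trans_lt hx).trans (cubeUniform_lt_norm_sub_le hy hs₀ hs₁)
  · simpa using one_sub_min_pow_pow_le_exp (x := t / √d) (by positivity) d m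

theorem one_div_two_le_measureReal_lt_nearestDist (hd : d ≠ 0) :
    1 / 2 ≤ ((Measure.pi fun _ : Fin m => cubeUniform d).prod (cubeUniform d)).real
      {ω | (m : ℝ) ^ (-(1 : ℝ) / d) / 4 < nearestDist ω} := by
  set τ := (m : ℝ) ^ (-(1 : ℝ) / d)
  have hm : (0 : ℝ) < m := Nat.cast_pos.2 (NeZero.pos m)
  have hball : (2 * (τ / 4)) ^ d ≤ 1 / (2 * m) := calc
    (2 * (τ / 4)) ^ d = 1 / (m * 2 ^ d) := by
      rw [show 2 * (τ / 4) = τ / 2 by ring, div_pow, rpow_neg_one_div_natCast_pow hm.le hd]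
      field_simp
    _ ≤ 1 / (2 * m) := by
      rw [mul_comm (2 : ℝ)]
      gcongr
      exact le_self_pow₀ one_le_two hd
  have hsmall : 1 / (2 * m : ℝ) ≤ 1 := by
    rw [div_le_one (by positivity)]; linarith [show (1 : ℝ) ≤ m by exact_mod_cast NeZero.one_le]
  calc (1 / 2 : ℝ) ≤ (1 - 1 / (2 * m)) ^ m := one_div_two_le_one_sub_pow m
    _ ≤ (1 - (2 * (τ / 4)) ^ d) ^ m := by gcongr
    _ ≤ _ := by
      simpa using le_measureReal_lt_nearestDist (ι := Fin m) (ν := cubeUniform d)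
        (b := 1 - (2 * (τ / 4)) ^ d) (by linarith)
        (ae_of_all _ fun y => ofReal_one_sub_le_cubeUniform_lt_norm_sub y (by positivity))

theorem ae_nearestDist_le_sqrt :
    ∀ᵐ ω ∂(Measure.pi fun _ : Fin m => cubeUniform d).prod (cubeUniform d),
      nearestDist ω ≤ √d := by
  have h : ((Measure.pi fun _ : Fin m => cubeUniform d).prod (cubeUniform d)).real
      {ω | √d < nearestDist ω} ≤ 0 := by
    simpa [zero_pow (NeZero.ne m)] using measureReal_lt_nearestDist_le (ι := Fin m) le_rfl
      ((ae_mem_unitCube d).mono fun y hy => by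
        simpa using cubeUniform_lt_norm_sub_le hy zero_le_one le_rfl)
  rw [ae_iff]
  simpa using (measureReal_eq_zero_iff).1 (h.antisymm measureReal_nonneg)

theorem integrable_nearestDist :
    Integrable nearestDist ((Measure.pi fun _ : Fin m => cubeUniform d).prod (cubeUniform d)) :=
  (integrable_const √d).mono' measurable_nearestDist.aestronglyMeasurable
    (ae_nearestDist_le_sqrt.mono fun ω h => by rwa [Real.norm_of_nonneg (nearestDist_nonneg ω)])

theorem le_integral_nearestDist (hd : d ≠ 0) :
    1 / 8 * (m : ℝ) ^ (-(1 : ℝ) / d) ≤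
      ∫ ω, nearestDist ω ∂(Measure.pi fun _ : Fin m => cubeUniform d).prod (cubeUniform d) := by
  set τ := (m : ℝ) ^ (-(1 : ℝ) / d)
  set P := (Measure.pi fun _ : Fin m => cubeUniform d).prod (cubeUniform d)
  calc 1 / 8 * τ = τ / 4 * (1 / 2) := by ring
    _ ≤ τ / 4 * P.real {ω | τ / 4 < nearestDist ω} := by
      gcongr; exact one_div_two_le_measureReal_lt_nearestDist hd
    _ ≤ τ / 4 * P.real {ω | τ / 4 ≤ nearestDist ω} := by
      gcongr
      · exact measure_ne_top _ _
      · exact le_of_lt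
    _ ≤ ∫ ω, nearestDist ω ∂P :=
      mul_meas_ge_le_integral_of_nonneg (ae_of_all _ nearestDist_nonneg) integrable_nearestDist _

theorem integral_nearestDist_le (hd : d ≠ 0) :
    ∫ ω, nearestDist ω ∂(Measure.pi fun _ : Fin m => cubeUniform d).prod (cubeUniform d) ≤
      √d * Gamma (1 / d + 1) * (m : ℝ) ^ (-(1 : ℝ) / d) := by
  have hm : (0 : ℝ) < m := Nat.cast_pos.2 (NeZero.pos m)
  rw [integrable_nearestDist.integral_eq_integral_meas_lt (ae_of_all _ nearestDist_nonneg)]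
  calc _ ≤ ∫ t in Ioi 0, exp (-(m * (t / √d) ^ d)) :=
        integral_mono_of_nonneg (ae_of_all _ fun _ => measureReal_nonneg)
          (integrableOn_exp_neg_mul_div_pow hm (by positivity) hd)
          ((ae_restrict_mem measurableSet_Ioi).mono fun t ht =>
            measureReal_lt_nearestDist_le_exp hd (le_of_lt ht))
    _ = _ := by rw [integral_exp_neg_mul_div_pow hm (by positivity) hd]; ring

end NearestPointInCube

/-- If `X₁, …, X_m, Y` are independent uniform points in the unit cube `[0,1]^d`, then
the expected distance from `Y` to its nearest point among `X₁, …, X_m` is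
`Θ(m^(-1/d))`, with constants depending only on `d`. -/
theorem stmt15 (d : ℕ) (hd : 1 ≤ d) :
    ∃ c₁ c₂ : ℝ, 0 < c₁ ∧ c₁ ≤ c₂ ∧
      ∀ m : ℕ, 1 ≤ m →
        c₁ * (m : ℝ) ^ (-(1 : ℝ) / d) ≤
            (∫ ω, (⨅ j : Fin m, ‖ω.2 - ω.1 j‖)
              ∂((Measure.pi fun _ : Fin m => cubeUniform d).prod (cubeUniform d))) ∧
          (∫ ω, (⨅ j : Fin m, ‖ω.2 - ω.1 j‖)
              ∂((Measure.pi fun _ : Fin m => cubeUniform d).prod (cubeUniform d))) ≤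
            c₂ * (m : ℝ) ^ (-(1 : ℝ) / d) := by
  have hd₀ : d ≠ 0 := by omega
  refine ⟨1 / 8, √d * Gamma (1 / d + 1), by norm_num, ?_, fun m hm => ?_⟩
  · -- at `m = 1` the expectation lies between the two constants
    simpa using (le_integral_nearestDist (m := 1) hd₀).trans (integral_nearestDist_le hd₀)
  · have : NeZero m := ⟨by omega⟩
    exact ⟨le_integral_nearestDist hd₀, integral_nearestDist_le hd₀⟩
end
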